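/- For all 0 < k < 2, J > 0 and 0 < M₁ ≤ M₂, the energy infima satisfy the scaling inequality I^k_{M₂,J} ≤ (M₂/M₁) · I^k_{M₁,J}. -/

import Mathlib

open MeasureTheory Real Filter Topology
open scoped ENNReal

noncomputable section

/-- Euclidean 3-space. -/
abbrev E3 := EuclideanSpace ℝ (Fin 3)

/-- `φ` belongs to (a C¹ surrogate of) the space `D¹(ℝ³)`: it is continuously
differentiable, its gradient is square integrable and it vanishes at infinity in
the sense that `{|φ| > a}` has finite measure for every `a > 0`. -/
def IsPotential (φ : E3 → ℝ) : Prop :=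
  ContDiff ℝ 1 φ ∧ (∫⁻ x : E3, ENNReal.ofReal (‖gradient φ x‖ ^ 2)) < ⊤ ∧
    ∀ a : ℝ, 0 < a → volume {x : E3 | a < |φ x|} < ⊤

/-- `f ∈ Γ^k_{M,J}`: `f` is measurable, a.e. nonnegative, with `‖f‖_{L¹} = M` and
`‖f‖_{L^{1+1/k}} ≤ J` (in particular `f ∈ L¹ ∩ L^{1+1/k}`). -/
def InGamma (k M J : ℝ) (f : E3 → E3 → ℝ) : Prop :=
  Measurable (Function.uncurry f) ∧
  (∀ᵐ z : E3 × E3, 0 ≤ f z.1 z.2) ∧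
  (∫⁻ z : E3 × E3, ENNReal.ofReal (f z.1 z.2)) = ENNReal.ofReal M ∧
  eLpNorm (Function.uncurry f) (ENNReal.ofReal (1 + 1/k)) volume ≤ ENNReal.ofReal J

/-- Kinetic energy `E_kin(f,φ) = ∫∫ √(e^{2φ(x)}+|p|²) f(x,p) dp dx` (value in `[0,∞]`). -/
def kinE (f : E3 → E3 → ℝ) (φ : E3 → ℝ) : ℝ≥0∞ :=
  ∫⁻ z : E3 × E3, ENNReal.ofReal (Real.sqrt (Real.exp (2 * φ z.1) + ‖z.2‖ ^ 2) * f z.1 z.2)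

/-- Energy functional `𝓔(f,φ) = E_kin(f,φ) + (1/2)∫ |∇φ|²` (value in `[0,∞]`). -/
def energy (f : E3 → E3 → ℝ) (φ : E3 → ℝ) : ℝ≥0∞ :=
  kinE f φ + (∫⁻ x : E3, ENNReal.ofReal (‖gradient φ x‖ ^ 2)) / 2

/-- `(f,φ)` is admissible: `f ∈ Γ^k_{M,J}`, `φ` is a potential and
`∫∫ √(1+|p|²) f dp dx < ∞`. -/
def Admissible (k M J : ℝ) (f : E3 → E3 → ℝ) (φ : E3 → ℝ) : Prop :=
  InGamma k M J f ∧ IsPotential φ ∧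
  (∫⁻ z : E3 × E3, ENNReal.ofReal (Real.sqrt (1 + ‖z.2‖ ^ 2) * f z.1 z.2)) < ⊤

/-- The energy infimum `I^k_{M,J} = inf {𝓔(f,φ) : (f,φ) admissible}`. -/
def energyInf (k M J : ℝ) : ℝ≥0∞ :=
  sInf { e : ℝ≥0∞ | ∃ f φ, Admissible k M J f φ ∧ e = energy f φ }

/-!
Rescaling `f ↦ c f(a ·, ·)` and `φ ↦ φ(a ·)` multiplies the mass and the kinetic energy by
`c a⁻³`, the `L^{1+1/k}` norm by `c a^{-3k/(k+1)}` and the field energy `∫ |∇φ|²` by `a⁻¹`.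
For `m ≥ 1` the choice `a = m^{-(k+1)/3}`, `c = m^{-k}` multiplies the mass by `m`, keeps the
`L^{1+1/k}` bound, and multiplies the kinetic energy by `m` and the field energy by
`m^{(k+1)/3} ≤ m` (here `k < 2` is used). Applied with `m = M₂/M₁` to every admissible pair of
mass `M₁`, this gives the inequality.
-/

section Dilation

variable {E F : Type*} [NormedAddCommGroup E] [NormedSpace ℝ E] [MeasurableSpace E]
  [BorelSpace E] [FiniteDimensional ℝ E] [MeasurableSpace F]

theorem MeasureTheory.Measure.lintegral_comp_smul (μ : Measure E) [μ.IsAddHaarMeasure]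
    (H : E → ℝ≥0∞) {a : ℝ} (ha : a ≠ 0) :
    ∫⁻ x, H (a • x) ∂μ = ENNReal.ofReal |(a ^ Module.finrank ℝ E)⁻¹| * ∫⁻ x, H x ∂μ := by
  rw [← smul_eq_mul, ← lintegral_smul_measure, ← Measure.map_addHaar_smul μ ha,
    (measurableEmbedding_const_smul₀ ha).lintegral_map]

theorem MeasureTheory.Measure.map_prodMap_smul_id (μ : Measure E) [μ.IsAddHaarMeasure]
    (ν : Measure F) [SFinite ν] {a : ℝ} (ha : a ≠ 0) :
    (μ.prod ν).map (Prod.map (a • ·) id) =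
      ENNReal.ofReal |(a ^ Module.finrank ℝ E)⁻¹| • μ.prod ν := by
  rw [← Measure.map_prod_map μ ν (measurable_const_smul a) measurable_id,
    Measure.map_addHaar_smul μ ha, Measure.map_id, Measure.prod_smul_left]

end Dilation

theorem gradient_comp_smul {F : Type*} [NormedAddCommGroup F] [InnerProductSpace ℝ F]
    [CompleteSpace F] (φ : F → ℝ) (a : ℝ) (x : F) :
    gradient (fun y => φ (a • y)) x = a • gradient φ (a • x) := by
  simp only [gradient, fderiv_comp_smul, map_smul]

lemma measurableEmbedding_dilate {a : ℝ} (ha : a ≠ 0) :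
    MeasurableEmbedding (Prod.map (a • ·) id : E3 × E3 → E3 × E3) :=
  (measurableEmbedding_const_smul₀ ha).prodMap MeasurableEmbedding.id

lemma volume_map_dilate {a : ℝ} (ha : 0 < a) :
    (volume : Measure (E3 × E3)).map (Prod.map (a • ·) id) =
      ENNReal.ofReal ((a ^ 3)⁻¹) • volume := by
  rw [Measure.volume_eq_prod, Measure.map_prodMap_smul_id _ _ ha.ne',
    finrank_euclideanSpace_fin, abs_of_pos (by positivity)]

lemma quasiMeasurePreserving_dilate {a : ℝ} (ha : 0 < a) :
    Measure.QuasiMeasurePreserving (Prod.map (a • ·) id : E3 × E3 → E3 × E3) :=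
  ⟨(measurableEmbedding_dilate ha.ne').measurable, by
    rw [volume_map_dilate ha]; exact Measure.smul_absolutelyContinuous⟩

lemma lintegral_comp_dilate {a : ℝ} (ha : 0 < a) (H : E3 × E3 → ℝ≥0∞) :
    ∫⁻ z : E3 × E3, H (a • z.1, z.2) = ENNReal.ofReal ((a ^ 3)⁻¹) * ∫⁻ z, H z := by
  rw [← smul_eq_mul, ← lintegral_smul_measure, ← volume_map_dilate ha,
    (measurableEmbedding_dilate ha.ne').lintegral_map]
  rfl

def rescaleDensity (c a : ℝ) (f : E3 → E3 → ℝ) : E3 → E3 → ℝ :=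
  fun x p => c * f (a • x) p

lemma lintegral_weight_mul_rescaleDensity {a c : ℝ} (ha : 0 < a) (hc : 0 ≤ c)
    (w : E3 × E3 → ℝ) (f : E3 → E3 → ℝ) :
    ∫⁻ z : E3 × E3, ENNReal.ofReal (w (a • z.1, z.2) * rescaleDensity c a f z.1 z.2) =
      ENNReal.ofReal (c * (a ^ 3)⁻¹) * ∫⁻ z : E3 × E3, ENNReal.ofReal (w z * f z.1 z.2) := by
  have hpt (z : E3 × E3) : ENNReal.ofReal (w (a • z.1, z.2) * rescaleDensity c a f z.1 z.2) =
      ENNReal.ofReal c * ENNReal.ofReal (w (a • z.1, z.2) * f (a • z.1) z.2) := by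
    rw [← ENNReal.ofReal_mul hc, rescaleDensity, mul_left_comm]
  simp_rw [hpt, lintegral_const_mul' _ _ ENNReal.ofReal_ne_top,
    lintegral_comp_dilate ha fun z => ENNReal.ofReal (w z * f z.1 z.2),
    ← mul_assoc, ← ENNReal.ofReal_mul hc]

lemma eLpNorm_rescaleDensity {a c : ℝ} (ha : 0 < a) (hc : 0 ≤ c) (f : E3 → E3 → ℝ)
    {q : ℝ≥0∞} (hq : q ≠ ∞) :
    eLpNorm (Function.uncurry (rescaleDensity c a f)) q volume =
      ENNReal.ofReal (c * ((a ^ 3)⁻¹) ^ q.toReal⁻¹) * eLpNorm (Function.uncurry f) q volume := by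
  have hcomp : Function.uncurry (rescaleDensity c a f) =
      c • (Function.uncurry f ∘ Prod.map (a • ·) id) := rfl
  rw [hcomp, eLpNorm_const_smul, ← (measurableEmbedding_dilate ha.ne').eLpNorm_map_measure,
    volume_map_dilate ha, eLpNorm_smul_measure_of_ne_top hq, smul_eq_mul, ← mul_assoc,
    ENNReal.ofReal_rpow_of_nonneg (by positivity) (by positivity), Real.enorm_eq_ofReal hc,
    ← ENNReal.ofReal_mul hc, one_div, ENNReal.toReal_inv]

lemma InGamma.rescaleDensity {k M J a c : ℝ} {f : E3 → E3 → ℝ} (hf : InGamma k M J f)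
    (hk : 0 < k) (ha : 0 < a) (hc : 0 < c) (hLq : c * ((a ^ 3)⁻¹) ^ (1 + 1 / k)⁻¹ = 1) :
    InGamma k (c * (a ^ 3)⁻¹ * M) J (rescaleDensity c a f) := by
  obtain ⟨hmeas, hnonneg, hmass, hLqf⟩ := hf
  refine ⟨(hmeas.comp (measurableEmbedding_dilate ha.ne').measurable).const_mul c,
    (quasiMeasurePreserving_dilate ha).ae hnonneg |>.mono fun z hz =>
      mul_nonneg hc.le hz, ?_, ?_⟩
  · simpa [hmass, ← ENNReal.ofReal_mul (by positivity : 0 ≤ c * (a ^ 3)⁻¹)] using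
      lintegral_weight_mul_rescaleDensity ha hc.le (fun _ => 1) f
  · rwa [eLpNorm_rescaleDensity ha hc.le f ENNReal.ofReal_ne_top,
      ENNReal.toReal_ofReal (by positivity), hLq, ENNReal.ofReal_one, one_mul]

lemma lintegral_sq_norm_gradient_comp_smul (φ : E3 → ℝ) {a : ℝ} (ha : 0 < a) :
    ∫⁻ x : E3, ENNReal.ofReal (‖gradient (fun y => φ (a • y)) x‖ ^ 2) =
      ENNReal.ofReal a⁻¹ * ∫⁻ x : E3, ENNReal.ofReal (‖gradient φ x‖ ^ 2) := by
  have hpt (x : E3) : ENNReal.ofReal (‖gradient (fun y => φ (a • y)) x‖ ^ 2) =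
      ENNReal.ofReal (a ^ 2) * ENNReal.ofReal (‖gradient φ (a • x)‖ ^ 2) := by
    rw [← ENNReal.ofReal_mul (by positivity), gradient_comp_smul, norm_smul, mul_pow,
      Real.norm_eq_abs, sq_abs]
  simp_rw [hpt]
  rw [lintegral_const_mul' _ _ ENNReal.ofReal_ne_top,
    Measure.lintegral_comp_smul volume (fun x => ENNReal.ofReal (‖gradient φ x‖ ^ 2)) ha.ne',
    finrank_euclideanSpace_fin, abs_of_pos (by positivity), ← mul_assoc,
    ← ENNReal.ofReal_mul (by positivity)]
  congr 2
  field_simp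

lemma IsPotential.comp_smul {φ : E3 → ℝ} (hφ : IsPotential φ) {a : ℝ} (ha : 0 < a) :
    IsPotential fun x => φ (a • x) := by
  obtain ⟨hC, hgrad, hvanish⟩ := hφ
  refine ⟨hC.comp (contDiff_const_smul a), ?_, fun b hb => ?_⟩
  · rw [lintegral_sq_norm_gradient_comp_smul φ ha]
    exact ENNReal.mul_lt_top ENNReal.ofReal_lt_top hgrad
  · calc volume {x : E3 | b < |φ (a • x)|}
        = volume ((a • ·) ⁻¹' {x : E3 | b < |φ x|}) := rfl
      _ < ⊤ := by
        rw [Measure.addHaar_preimage_smul volume ha.ne']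
        exact ENNReal.mul_lt_top ENNReal.ofReal_lt_top (hvanish b hb)

lemma Admissible.rescale {k M J a c : ℝ} {f : E3 → E3 → ℝ} {φ : E3 → ℝ}
    (h : Admissible k M J f φ) (hk : 0 < k) (ha : 0 < a) (hc : 0 < c)
    (hLq : c * ((a ^ 3)⁻¹) ^ (1 + 1 / k)⁻¹ = 1) :
    Admissible k (c * (a ^ 3)⁻¹ * M) J (rescaleDensity c a f) (fun x => φ (a • x)) := by
  obtain ⟨hf, hφ, hmoment⟩ := h
  refine ⟨hf.rescaleDensity hk ha hc hLq, hφ.comp_smul ha, ?_⟩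
  rw [lintegral_weight_mul_rescaleDensity ha hc.le (fun z => √(1 + ‖z.2‖ ^ 2)) f]
  exact ENNReal.mul_lt_top ENNReal.ofReal_lt_top hmoment

lemma energy_rescale {a c : ℝ} (ha : 0 < a) (hc : 0 ≤ c) (f : E3 → E3 → ℝ) (φ : E3 → ℝ) :
    energy (rescaleDensity c a f) (fun x => φ (a • x)) =
      ENNReal.ofReal (c * (a ^ 3)⁻¹) * kinE f φ +
        ENNReal.ofReal a⁻¹ * (∫⁻ x : E3, ENNReal.ofReal (‖gradient φ x‖ ^ 2)) / 2 := by
  rw [energy, lintegral_sq_norm_gradient_comp_smul φ ha, kinE,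
    lintegral_weight_mul_rescaleDensity ha hc (fun z => √(exp (2 * φ z.1) + ‖z.2‖ ^ 2)) f]
  rfl

lemma Admissible.exists_mul_mass_energy_le {k M J m : ℝ} {f : E3 → E3 → ℝ} {φ : E3 → ℝ}
    (h : Admissible k M J f φ) (hk : 0 < k) (hk2 : k < 2) (hm : 1 ≤ m) :
    ∃ g ψ, Admissible k (m * M) J g ψ ∧ energy g ψ ≤ ENNReal.ofReal m * energy f φ := by
  have hm0 : 0 < m := zero_lt_one.trans_le hm
  set a := m ^ (-(k + 1) / 3)
  have ha : 0 < a := rpow_pos_of_pos hm0 _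
  have hvol : (a ^ 3)⁻¹ = m ^ (k + 1) := by
    rw [← rpow_natCast, ← rpow_mul hm0.le, ← rpow_neg hm0.le]
    congr 1; push_cast; ring
  have hmass : m ^ (-k) * (a ^ 3)⁻¹ = m := by
    rw [hvol, ← rpow_add hm0, neg_add_cancel_left, rpow_one]
  have hLq : m ^ (-k) * ((a ^ 3)⁻¹) ^ (1 + 1 / k)⁻¹ = 1 := by
    rw [hvol, ← rpow_mul hm0.le, ← rpow_add hm0]
    convert rpow_zero m using 2
    field_simp
    ring
  have hfield : a⁻¹ ≤ m := by
    rw [← rpow_neg hm0.le, neg_div, neg_neg]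
    exact rpow_le_self_of_one_le hm (by linarith)
  refine ⟨_, _, hmass ▸ h.rescale hk ha (by positivity) hLq, ?_⟩
  rw [energy_rescale ha (by positivity), hmass, energy, mul_add, mul_div_assoc]
  gcongr

lemma energyInf_le_energy {k M J : ℝ} {f : E3 → E3 → ℝ} {φ : E3 → ℝ}
    (h : Admissible k M J f φ) : energyInf k M J ≤ energy f φ :=
  sInf_le ⟨f, φ, h, rfl⟩

theorem energyInf_scaling_general (k J M₁ M₂ : ℝ) (hk : 0 < k) (hk2 : k < 2)
    (hM₁ : 0 < M₁) (hM : M₁ ≤ M₂) :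
    energyInf k M₂ J ≤ ENNReal.ofReal (M₂ / M₁) * energyInf k M₁ J := by
  have hm : 1 ≤ M₂ / M₁ := (one_le_div hM₁).2 hM
  have hm0 : ENNReal.ofReal (M₂ / M₁) ≠ 0 := (ENNReal.ofReal_pos.2 (zero_lt_one.trans_le hm)).ne'
  rw [mul_comm, ← ENNReal.div_le_iff_le_mul (.inl hm0) (.inl ENNReal.ofReal_ne_top)]
  refine le_sInf ?_
  rintro _ ⟨f, φ, hadm, rfl⟩
  obtain ⟨g, ψ, hg, hle⟩ := hadm.exists_mul_mass_energy_le hk hk2 hm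
  rw [div_mul_cancel₀ _ hM₁.ne'] at hg
  rw [ENNReal.div_le_iff_le_mul (.inl hm0) (.inl ENNReal.ofReal_ne_top), mul_comm]
  exact (energyInf_le_energy hg).trans hle

/-- scaling inequality `I^k_{M₂,J} ≤ (M₂/M₁) I^k_{M₁,J}` for `0 < M₁ ≤ M₂`. -/
theorem energyInf_scaling (k J M₁ M₂ : ℝ) (hk : 0 < k) (hk2 : k < 2) (hJ : 0 < J)
    (hM₁ : 0 < M₁) (hM : M₁ ≤ M₂) :
    energyInf k M₂ J ≤ ENNReal.ofReal (M₂ / M₁) * energyInf k M₁ J :=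
  energyInf_scaling_general k J M₁ M₂ hk hk2 hM₁ hM
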